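/- Consider a discrete memoryless network p(y_2^N | x^N) with single source node 1 and multicast destination set D ⊆ [2:N]. Define the compress–forward lower bound R* = max min_{d∈D} I(X_1; Ŷ_2^N, Y_d | X_2^N), where the maximum is over pmfs ∏_{k=1}^N p(x_k) p(ŷ_k | y_k, x_k) such that I(Y(T); Ŷ(T) | X_2^N, Ŷ(T^c), Y_d) + Σ_{k∈T} I(X_2^N; Ŷ_k | X_k) ≤ I(X(T); Y_d | X(T^c), X_d) for all T ⊆ [2:N] (T^c = [2:N]\T). Define the noisy network coding lower bound R_NNC = max over ∏_{k=1}^N p(x_k) p(ŷ_k | y_k, x_k) of min_{d∈D} min_{T⊆[2:N]} [ I(X_1, X(T); Ŷ(T^c), Y_d | X(T^c), X_d) − I(Y(T); Ŷ(T) | X^N, Ŷ(T^c), Y_d) ]. Then R* ≤ R_NNC; moreover, for each fixed pmf, destination d, and cut T, the noisy network coding expression exceeds the compress–forward expression by exactly the nonnegative quantity I(X(T); Ŷ(T^c) | X(T^c), Y_d, X_d) + Σ_{k∈T} I(Ŷ_k; X_2^N | X_k). -/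

import Mathlib

/-!
Noisy network coding is uniformly at least as good as the pure compress–forward scheme
of Kramer–Gastpar–Gupta for single-source multicast networks (Appendix C of
Lim–Kim–El Gamal–Chung), with an explicit nonnegative gap for each destination and cut.
-/

open scoped BigOperators Classical
set_option linter.unusedSectionVars false
set_option linter.unusedVariables false
set_option maxHeartbeats 1000000

namespace NNC

/-- The probability that `X` takes the value `b` under the pmf `μ` on the finite sample
space `Ω`. -/
noncomputable def prob {Ω : Type*} [Fintype Ω] {β : Type*} (μ : Ω → ℝ) (X : Ω → β)
    (b : β) : ℝ :=
  ∑ ω, if X ω = b then μ ω else 0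

/-- Shannon entropy (in bits) of `X` under the pmf `μ`. -/
noncomputable def ent {Ω : Type*} [Fintype Ω] {β : Type*} [Fintype β]
    (μ : Ω → ℝ) (X : Ω → β) : ℝ :=
  - ∑ b, prob μ X b * Real.logb 2 (prob μ X b)

/-- Conditional mutual information `I(X; Y | Z)` (in bits) under the pmf `μ`. -/
noncomputable def condMI {Ω : Type*} [Fintype Ω] {α β γ : Type*} [Fintype α] [Fintype β]
    [Fintype γ] (μ : Ω → ℝ) (X : Ω → α) (Y : Ω → β) (Z : Ω → γ) : ℝ :=
  ent μ (fun ω => (X ω, Z ω)) + ent μ (fun ω => (Y ω, Z ω))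
    - ent μ (fun ω => (X ω, Y ω, Z ω)) - ent μ Z


section GenericIT
variable {Ω : Type*} [Fintype Ω] {α β γ : Type*} [Fintype α] [Fintype β] [Fintype γ]
  (μ : Ω → ℝ)

lemma prob_congr_val {A : Ω → β} {B : Ω → γ} (ω₀ : Ω)
    (h : ∀ ω, A ω = A ω₀ ↔ B ω = B ω₀) : prob μ A (A ω₀) = prob μ B (B ω₀) := by
  unfold prob
  exact Finset.sum_congr rfl fun ω _ => if_congr (h ω) rfl rfl

lemma prob_eq_zero_of_not_mem {A : Ω → β} {b : β} (h : ∀ ω, A ω ≠ b) :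
    prob μ A b = 0 := by
  unfold prob
  exact Finset.sum_eq_zero fun ω _ => if_neg (h ω)

lemma ent_congr {A : Ω → β} {B : Ω → γ}
    (h : ∀ ω ω', A ω = A ω' ↔ B ω = B ω') : ent μ A = ent μ B := by
  classical
  unfold ent
  congr 1
  rw [← Finset.sum_subset (Finset.subset_univ (Finset.univ.image A)),
      ← Finset.sum_subset (Finset.subset_univ (Finset.univ.image B))]
  · apply Finset.sum_bij (i := fun b hb => B (Classical.choose
      (Finset.mem_image.mp hb)))
    · intro b hb
      exact Finset.mem_image.mpr ⟨_, Finset.mem_univ _, rfl⟩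
    · intro b₁ hb₁ b₂ hb₂ heq
      obtain ⟨ω₁, _, h1⟩ := Finset.mem_image.mp hb₁
      obtain ⟨ω₂, _, h2⟩ := Finset.mem_image.mp hb₂
      have e1 := (Classical.choose_spec (Finset.mem_image.mp hb₁)).2
      have e2 := (Classical.choose_spec (Finset.mem_image.mp hb₂)).2
      rw [← e1, ← e2]
      exact ((h _ _).mpr heq)
    · intro c hc
      obtain ⟨ω, _, hω⟩ := Finset.mem_image.mp hc
      refine ⟨A ω, Finset.mem_image.mpr ⟨ω, Finset.mem_univ _, rfl⟩, ?_⟩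
      have e := (Classical.choose_spec (Finset.mem_image.mp
        (Finset.mem_image.mpr ⟨ω, Finset.mem_univ ω, rfl⟩ : A ω ∈ Finset.univ.image A))).2
      rw [← hω]
      exact (h _ _).mp e
    · intro b hb
      have e := (Classical.choose_spec (Finset.mem_image.mp hb)).2
      set ω₀ := Classical.choose (Finset.mem_image.mp hb)
      rw [← e]
      have := prob_congr_val μ ω₀ (fun ω => h ω ω₀)
      rw [this]
  · intro c _ hc
    have : prob μ B c = 0 := prob_eq_zero_of_not_mem μ (by
      intro ω hω; exact hc (Finset.mem_image.mpr ⟨ω, Finset.mem_univ _, hω⟩))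
    simp [this]
  · intro b _ hb
    have : prob μ A b = 0 := prob_eq_zero_of_not_mem μ (by
      intro ω hω; exact hb (Finset.mem_image.mpr ⟨ω, Finset.mem_univ _, hω⟩))
    simp [this]

lemma condMI_symm (X : Ω → α) (Y : Ω → β) (Z : Ω → γ) :
    condMI μ X Y Z = condMI μ Y X Z := by
  unfold condMI
  have h1 : ent μ (fun ω => (X ω, Y ω, Z ω)) = ent μ (fun ω => (Y ω, X ω, Z ω)) := by
    apply ent_congr
    intro ω ω'
    simp only [Prod.mk.injEq]
    tauto
  rw [h1]; ring


end GenericIT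

section GenericIT2
section
variable {α β γ : Type*} [Fintype α] [Fintype β] [Fintype γ]

lemma sum3_comm₁ (f : α → β → γ → ℝ) :
    (∑ y, ∑ z, ∑ x, f x y z) = ∑ x, ∑ y, ∑ z, f x y z :=
  calc (∑ y, ∑ z, ∑ x, f x y z)
      = ∑ y, ∑ x, ∑ z, f x y z := Finset.sum_congr rfl (fun y _ => Finset.sum_comm)
    _ = ∑ x, ∑ y, ∑ z, f x y z := Finset.sum_comm

lemma sum3_comm₂ (f : α → β → γ → ℝ) :
    (∑ z, ∑ x, ∑ y, f x y z) = ∑ x, ∑ y, ∑ z, f x y z :=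
  calc (∑ z, ∑ x, ∑ y, f x y z)
      = ∑ x, ∑ z, ∑ y, f x y z := Finset.sum_comm
    _ = ∑ x, ∑ y, ∑ z, f x y z := Finset.sum_congr rfl (fun x _ => Finset.sum_comm)

end

variable {Ω : Type*} [Fintype Ω] {α β γ : Type*} [Fintype α] [Fintype β] [Fintype γ]
  (μ : Ω → ℝ) (X : Ω → α) (Y : Ω → β) (Z : Ω → γ)

lemma prob_nonneg (h : ∀ ω, 0 ≤ μ ω) (B : Ω → β) (b : β) : 0 ≤ prob μ B b :=
  Finset.sum_nonneg fun ω _ => by split <;> simp [h ω]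

lemma sum_prob (B : Ω → β) : ∑ b, prob μ B b = ∑ ω, μ ω := by
  unfold prob
  rw [Finset.sum_comm]
  refine Finset.sum_congr rfl fun ω _ => ?_
  have h : ∀ b : β, (if B ω = b then μ ω else 0)
      = if B ω = b then (fun _ : β => μ ω) b else 0 := fun b => rfl
  rw [Finset.sum_congr rfl fun b _ => h b, Finset.sum_ite_eq, if_pos (Finset.mem_univ _)]

lemma prob_XZ_eq (x : α) (z : γ) :
    prob μ (fun ω => (X ω, Z ω)) (x, z)
      = ∑ y, prob μ (fun ω => (X ω, Y ω, Z ω)) (x, y, z) := by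
  unfold prob
  rw [Finset.sum_comm]
  refine Finset.sum_congr rfl fun ω _ => ?_
  beta_reduce
  rw [Finset.sum_eq_single (Y ω)]
  · simp [Prod.ext_iff]
  · intro b _ hb
    exact if_neg (by simp only [Prod.mk.injEq]; tauto)
  · simp

lemma prob_YZ_eq (y : β) (z : γ) :
    prob μ (fun ω => (Y ω, Z ω)) (y, z)
      = ∑ x, prob μ (fun ω => (X ω, Y ω, Z ω)) (x, y, z) := by
  unfold prob
  rw [Finset.sum_comm]
  refine Finset.sum_congr rfl fun ω _ => ?_
  beta_reduce
  rw [Finset.sum_eq_single (X ω)]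
  · simp [Prod.ext_iff]
  · intro b _ hb
    exact if_neg (by simp only [Prod.mk.injEq]; tauto)
  · simp

lemma prob_Z_eq (z : γ) :
    prob μ Z z = ∑ x, ∑ y, prob μ (fun ω => (X ω, Y ω, Z ω)) (x, y, z) := by
  have h : ∀ x, prob μ (fun ω => (X ω, Z ω)) (x, z)
      = ∑ y, prob μ (fun ω => (X ω, Y ω, Z ω)) (x, y, z) := fun x =>
    prob_XZ_eq μ X Y Z x z
  rw [Finset.sum_congr rfl fun x _ => (h x).symm]
  unfold prob
  rw [Finset.sum_comm]
  refine Finset.sum_congr rfl fun ω _ => ?_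
  beta_reduce
  rw [Finset.sum_eq_single (X ω)]
  · simp [Prod.ext_iff]
  · intro b _ hb
    exact if_neg (by simp only [Prod.mk.injEq]; tauto)
  · simp

lemma condMI_eq_sum :
    condMI μ X Y Z = ∑ x, ∑ y, ∑ z,
      prob μ (fun ω => (X ω, Y ω, Z ω)) (x, y, z) *
        (Real.logb 2 (prob μ (fun ω => (X ω, Y ω, Z ω)) (x, y, z))
          + Real.logb 2 (prob μ Z z)
          - Real.logb 2 (prob μ (fun ω => (X ω, Z ω)) (x, z))
          - Real.logb 2 (prob μ (fun ω => (Y ω, Z ω)) (y, z))) := by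
  have hXZ : ent μ (fun ω => (X ω, Z ω))
      = - ∑ x, ∑ y, ∑ z, prob μ (fun ω => (X ω, Y ω, Z ω)) (x, y, z)
          * Real.logb 2 (prob μ (fun ω => (X ω, Z ω)) (x, z)) := by
    unfold ent
    rw [Fintype.sum_prod_type]
    congr 1
    refine Finset.sum_congr rfl fun x _ => ?_
    refine Eq.trans ?_ Finset.sum_comm
    refine Finset.sum_congr rfl fun z _ => ?_
    rw [prob_XZ_eq μ X Y Z x z, Finset.sum_mul]
  have hYZ : ent μ (fun ω => (Y ω, Z ω))
      = - ∑ x, ∑ y, ∑ z, prob μ (fun ω => (X ω, Y ω, Z ω)) (x, y, z)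
          * Real.logb 2 (prob μ (fun ω => (Y ω, Z ω)) (y, z)) := by
    unfold ent
    rw [Fintype.sum_prod_type]
    congr 1
    refine Eq.trans ?_ (sum3_comm₁ _)
    refine Finset.sum_congr rfl fun y _ => ?_
    refine Finset.sum_congr rfl fun z _ => ?_
    rw [prob_YZ_eq μ X Y Z y z, Finset.sum_mul]
  have hXYZ : ent μ (fun ω => (X ω, Y ω, Z ω))
      = - ∑ x, ∑ y, ∑ z, prob μ (fun ω => (X ω, Y ω, Z ω)) (x, y, z)
          * Real.logb 2 (prob μ (fun ω => (X ω, Y ω, Z ω)) (x, y, z)) := by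
    unfold ent
    rw [Fintype.sum_prod_type]
    congr 1
    refine Finset.sum_congr rfl fun x _ => ?_
    rw [Fintype.sum_prod_type]
  have hZ : ent μ Z
      = - ∑ x, ∑ y, ∑ z, prob μ (fun ω => (X ω, Y ω, Z ω)) (x, y, z)
          * Real.logb 2 (prob μ Z z) := by
    unfold ent
    congr 1
    refine Eq.trans ?_ (sum3_comm₂ _)
    refine Finset.sum_congr rfl fun z _ => ?_
    rw [prob_Z_eq μ X Y Z z, Finset.sum_mul]
    refine Finset.sum_congr rfl fun x _ => ?_
    rw [Finset.sum_mul]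
  unfold condMI
  rw [hXZ, hYZ, hXYZ, hZ]
  simp only [mul_add, mul_sub, Finset.sum_add_distrib, Finset.sum_sub_distrib]
  ring

lemma condMI_eq_zero (hμ0 : ∀ ω, 0 ≤ μ ω)
    (hfac : ∀ x y z, prob μ (fun ω => (X ω, Y ω, Z ω)) (x, y, z) * prob μ Z z
      = prob μ (fun ω => (X ω, Z ω)) (x, z) * prob μ (fun ω => (Y ω, Z ω)) (y, z)) :
    condMI μ X Y Z = 0 := by
  rw [condMI_eq_sum]
  refine Finset.sum_eq_zero fun x _ => Finset.sum_eq_zero fun y _ =>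
    Finset.sum_eq_zero fun z _ => ?_
  by_cases h0 : prob μ (fun ω => (X ω, Y ω, Z ω)) (x, y, z) = 0
  · rw [h0, zero_mul]
  have hp3 : 0 < prob μ (fun ω => (X ω, Y ω, Z ω)) (x, y, z) :=
    lt_of_le_of_ne (prob_nonneg μ hμ0 _ _) (Ne.symm h0)
  have hxz : 0 < prob μ (fun ω => (X ω, Z ω)) (x, z) := by
    rw [prob_XZ_eq μ X Y Z x z]
    exact lt_of_lt_of_le hp3 (Finset.single_le_sum
      (f := fun y' => prob μ (fun ω => (X ω, Y ω, Z ω)) (x, y', z))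
      (fun b _ => prob_nonneg μ hμ0 _ _) (Finset.mem_univ y))
  have hyz : 0 < prob μ (fun ω => (Y ω, Z ω)) (y, z) := by
    rw [prob_YZ_eq μ X Y Z y z]
    exact lt_of_lt_of_le hp3 (Finset.single_le_sum
      (f := fun x' => prob μ (fun ω => (X ω, Y ω, Z ω)) (x', y, z))
      (fun b _ => prob_nonneg μ hμ0 _ _) (Finset.mem_univ x))
  have hz : 0 < prob μ Z z := by
    rw [prob_Z_eq μ X Y Z z]
    calc (0:ℝ) < prob μ (fun ω => (X ω, Y ω, Z ω)) (x, y, z) := hp3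
    _ ≤ ∑ y', prob μ (fun ω => (X ω, Y ω, Z ω)) (x, y', z) :=
        Finset.single_le_sum (f := fun y' => prob μ (fun ω => (X ω, Y ω, Z ω)) (x, y', z))
          (fun b _ => prob_nonneg μ hμ0 _ _) (Finset.mem_univ y)
    _ ≤ _ := Finset.single_le_sum
        (f := fun x' => ∑ y', prob μ (fun ω => (X ω, Y ω, Z ω)) (x', y', z))
        (fun b _ => Finset.sum_nonneg fun c _ => prob_nonneg μ hμ0 _ _)
        (Finset.mem_univ x)
  have key : Real.logb 2 (prob μ (fun ω => (X ω, Y ω, Z ω)) (x, y, z))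
      + Real.logb 2 (prob μ Z z)
      - Real.logb 2 (prob μ (fun ω => (X ω, Z ω)) (x, z))
      - Real.logb 2 (prob μ (fun ω => (Y ω, Z ω)) (y, z)) = 0 := by
    rw [← Real.logb_mul (ne_of_gt hp3) (ne_of_gt hz), hfac x y z,
      Real.logb_mul (ne_of_gt hxz) (ne_of_gt hyz)]
    ring
  rw [key, mul_zero]

lemma condMI_nonneg (hμ0 : ∀ ω, 0 ≤ μ ω) (hμ1 : ∑ ω, μ ω = 1) :
    0 ≤ condMI μ X Y Z := by
  classical
  set p3 : α × β × γ → ℝ := prob μ (fun ω => (X ω, Y ω, Z ω)) with hp3def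
  set pXZ : α × γ → ℝ := prob μ (fun ω => (X ω, Z ω)) with hpXZdef
  set pYZ : β × γ → ℝ := prob μ (fun ω => (Y ω, Z ω)) with hpYZdef
  set pZ : γ → ℝ := prob μ Z with hpZdef
  have hp3nn : ∀ p, 0 ≤ p3 p := fun p => prob_nonneg μ hμ0 _ _
  have hpXZnn : ∀ p, 0 ≤ pXZ p := fun p => prob_nonneg μ hμ0 _ _
  have hpYZnn : ∀ p, 0 ≤ pYZ p := fun p => prob_nonneg μ hμ0 _ _
  have hpZnn : ∀ z, 0 ≤ pZ z := fun z => prob_nonneg μ hμ0 _ _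
  have hXZy : ∀ x z, pXZ (x, z) = ∑ y, p3 (x, y, z) := fun x z => prob_XZ_eq μ X Y Z x z
  have hYZx : ∀ y z, pYZ (y, z) = ∑ x, p3 (x, y, z) := fun y z => prob_YZ_eq μ X Y Z y z
  have hZxy : ∀ z, pZ z = ∑ x, ∑ y, p3 (x, y, z) := fun z => prob_Z_eq μ X Y Z z
  have hsumXZ : ∀ z, ∑ x, pXZ (x, z) = pZ z := by
    intro z
    rw [hZxy z]
    exact Finset.sum_congr rfl fun x _ => hXZy x z
  have hsumYZ : ∀ z, ∑ y, pYZ (y, z) = pZ z := by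
    intro z
    rw [hZxy z]
    rw [Finset.sum_comm]
    exact Finset.sum_congr rfl fun y _ => hYZx y z
  have hsumZ : ∑ z, pZ z = 1 := by rw [hpZdef, sum_prob]; exact hμ1
  have hsum : condMI μ X Y Z = ∑ p : α × β × γ,
      p3 p * (Real.logb 2 (p3 p) + Real.logb 2 (pZ p.2.2)
        - Real.logb 2 (pXZ (p.1, p.2.2)) - Real.logb 2 (pYZ (p.2.1, p.2.2))) := by
    rw [condMI_eq_sum, Fintype.sum_prod_type]
    exact Finset.sum_congr rfl fun x _ => by rw [Fintype.sum_prod_type]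
  rw [hsum]
  set f : α × β × γ → ℝ := fun p =>
      p3 p * (Real.logb 2 (p3 p) + Real.logb 2 (pZ p.2.2)
        - Real.logb 2 (pXZ (p.1, p.2.2)) - Real.logb 2 (pYZ (p.2.1, p.2.2))) with hfdef
  set S : Finset (α × β × γ) := Finset.univ.filter (fun p => p3 p ≠ 0) with hSdef
  have hmemS : ∀ p, p ∈ S ↔ p3 p ≠ 0 := by
    intro p; rw [hSdef]; simp
  have hSsum : ∑ p : α × β × γ, f p = ∑ p ∈ S, f p := by
    refine (Finset.sum_subset (Finset.filter_subset _ _) ?_).symm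
    intro p _ hp
    have h0 : p3 p = 0 := by
      by_contra hc
      exact hp ((hmemS p).mpr hc)
    rw [hfdef]
    simp only [h0, zero_mul]
  rw [hSsum]
  have hpos : ∀ p ∈ S, 0 < p3 p ∧ 0 < pXZ (p.1, p.2.2) ∧ 0 < pYZ (p.2.1, p.2.2)
      ∧ 0 < pZ p.2.2 := by
    intro p hp
    have h0 : p3 p ≠ 0 := (hmemS p).mp hp
    have hp3 : 0 < p3 p := lt_of_le_of_ne (hp3nn p) (Ne.symm h0)
    obtain ⟨x, y, z⟩ := p
    refine ⟨hp3, ?_, ?_, ?_⟩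
    · rw [hXZy x z]
      exact lt_of_lt_of_le hp3 (Finset.single_le_sum
        (f := fun y' => p3 (x, y', z)) (fun b _ => hp3nn _) (Finset.mem_univ y))
    · rw [hYZx y z]
      exact lt_of_lt_of_le hp3 (Finset.single_le_sum
        (f := fun x' => p3 (x', y, z)) (fun b _ => hp3nn _) (Finset.mem_univ x))
    · rw [hZxy z]
      calc (0:ℝ) < p3 (x, y, z) := hp3
      _ ≤ ∑ y', p3 (x, y', z) :=
          Finset.single_le_sum (f := fun y' => p3 (x, y', z))
            (fun b _ => hp3nn _) (Finset.mem_univ y)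
      _ ≤ _ := Finset.single_le_sum
          (f := fun x' => ∑ y', p3 (x', y', z))
          (fun b _ => Finset.sum_nonneg fun c _ => hp3nn _)
          (Finset.mem_univ x)
  set r : α × β × γ → ℝ := fun p =>
      pXZ (p.1, p.2.2) * pYZ (p.2.1, p.2.2) / (p3 p * pZ p.2.2) with hrdef
  have hrpos : ∀ p ∈ S, 0 < r p := by
    intro p hp
    obtain ⟨h1, h2, h3, h4⟩ := hpos p hp
    have : 0 < pXZ (p.1, p.2.2) * pYZ (p.2.1, p.2.2) / (p3 p * pZ p.2.2) :=
      div_pos (mul_pos h2 h3) (mul_pos h1 h4)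
    rw [hrdef]
    exact this
  have hf_eq : ∀ p ∈ S, f p = -(Real.log 2)⁻¹ * (p3 p * Real.log (r p)) := by
    intro p hp
    obtain ⟨h1, h2, h3, h4⟩ := hpos p hp
    have hr : Real.log (r p) = Real.log (pXZ (p.1, p.2.2)) + Real.log (pYZ (p.2.1, p.2.2))
        - Real.log (p3 p) - Real.log (pZ p.2.2) := by
      rw [hrdef]
      show Real.log (pXZ (p.1, p.2.2) * pYZ (p.2.1, p.2.2) / (p3 p * pZ p.2.2)) = _
      rw [Real.log_div (by positivity) (by positivity),
        Real.log_mul (ne_of_gt h2) (ne_of_gt h3),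
        Real.log_mul (ne_of_gt h1) (ne_of_gt h4)]
      ring
    rw [hfdef]
    show p3 p * (Real.logb 2 (p3 p) + Real.logb 2 (pZ p.2.2)
        - Real.logb 2 (pXZ (p.1, p.2.2)) - Real.logb 2 (pYZ (p.2.1, p.2.2))) = _
    simp only [Real.logb, hr]
    field_simp
    ring
  rw [Finset.sum_congr rfl hf_eq, ← Finset.mul_sum]
  have hlog2 : (0:ℝ) < Real.log 2 := Real.log_pos (by norm_num)
  have hw1 : ∑ p ∈ S, p3 p = 1 := by
    rw [Finset.sum_subset (Finset.filter_subset _ _) (fun p _ hp => by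
      by_contra hc
      exact hp ((hmemS p).mpr hc))]
    rw [hp3def, sum_prob]
    exact hμ1
  have hjensen : ∑ p ∈ S, p3 p * Real.log (r p) ≤ Real.log (∑ p ∈ S, p3 p * r p) := by
    have := strictConcaveOn_log_Ioi.concaveOn.le_map_sum
      (t := S) (w := fun p => p3 p) (p := r)
      (fun p _ => hp3nn p) hw1 (fun p hp => hrpos p hp)
    simpa using this
  have hsumr : ∑ p ∈ S, p3 p * r p ≤ 1 := by
    have hwr : ∀ p ∈ S, p3 p * r p
        = pXZ (p.1, p.2.2) * pYZ (p.2.1, p.2.2) / pZ p.2.2 := by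
      intro p hp
      obtain ⟨h1, h2, h3, h4⟩ := hpos p hp
      rw [hrdef]
      show p3 p * (pXZ (p.1, p.2.2) * pYZ (p.2.1, p.2.2) / (p3 p * pZ p.2.2)) = _
      field_simp
    rw [Finset.sum_congr rfl hwr]
    set T : Finset (α × β × γ) := Finset.univ.filter (fun p => 0 < pZ p.2.2) with hTdef
    have hmemT : ∀ p, p ∈ T ↔ 0 < pZ p.2.2 := by
      intro p; rw [hTdef]; simp
    have hST : S ⊆ T := fun p hp => (hmemT p).mpr (hpos p hp).2.2.2
    have h1 : ∑ p ∈ S, pXZ (p.1, p.2.2) * pYZ (p.2.1, p.2.2) / pZ p.2.2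
        ≤ ∑ p ∈ T, pXZ (p.1, p.2.2) * pYZ (p.2.1, p.2.2) / pZ p.2.2 := by
      refine Finset.sum_le_sum_of_subset_of_nonneg hST fun p hp _ => ?_
      have hzp := (hmemT p).mp hp
      have ha := hpXZnn (p.1, p.2.2)
      have hb := hpYZnn (p.2.1, p.2.2)
      positivity
    refine le_trans h1 ?_
    have h2 : ∑ p ∈ T, pXZ (p.1, p.2.2) * pYZ (p.2.1, p.2.2) / pZ p.2.2
        = ∑ z, if 0 < pZ z then pZ z else 0 := by
      rw [hTdef, Finset.sum_filter, Fintype.sum_prod_type]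
      rw [show (∑ x, ∑ q : β × γ, if 0 < pZ q.2
            then pXZ (x, q.2) * pYZ (q.1, q.2) / pZ q.2 else 0)
          = ∑ x, ∑ y, ∑ z, (if 0 < pZ z then pXZ (x, z) * pYZ (y, z) / pZ z else 0) from
        Finset.sum_congr rfl fun x _ => by rw [Fintype.sum_prod_type]]
      rw [← sum3_comm₂ (fun x y z => if 0 < pZ z then pXZ (x, z) * pYZ (y, z) / pZ z else 0)]
      refine Finset.sum_congr rfl fun z _ => ?_
      by_cases hz : 0 < pZ z
      · simp only [hz, if_true]
        calc (∑ x, ∑ y, pXZ (x, z) * pYZ (y, z) / pZ z)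
            = ∑ x, pXZ (x, z) * (∑ y, pYZ (y, z)) / pZ z := by
              refine Finset.sum_congr rfl fun x _ => ?_
              rw [Finset.mul_sum, Finset.sum_div]
          _ = ∑ x, pXZ (x, z) * pZ z / pZ z := by
              refine Finset.sum_congr rfl fun x _ => ?_
              rw [hsumYZ z]
          _ = ∑ x, pXZ (x, z) := by
              refine Finset.sum_congr rfl fun x _ => ?_
              rw [mul_div_assoc, div_self (ne_of_gt hz), mul_one]
          _ = pZ z := hsumXZ z
      · simp only [hz, if_false]
        exact Finset.sum_eq_zero fun x _ => Finset.sum_eq_zero fun y _ => by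
          simp [hz]
    rw [h2]
    calc (∑ z, if 0 < pZ z then pZ z else 0) ≤ ∑ z, pZ z := by
          refine Finset.sum_le_sum fun z _ => ?_
          by_cases hz : 0 < pZ z <;> simp [hz, hpZnn z]
      _ = 1 := hsumZ
  have hlogle : Real.log (∑ p ∈ S, p3 p * r p) ≤ 0 :=
    Real.log_nonpos (Finset.sum_nonneg fun p hp =>
      le_of_lt (mul_pos (hpos p hp).1 (hrpos p hp))) hsumr
  have hfin : ∑ p ∈ S, p3 p * Real.log (r p) ≤ 0 := le_trans hjensen hlogle
  nlinarith [hfin, inv_pos.mpr hlog2]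


end GenericIT2

/-- The relay/destination nodes `2, …, N` (node `1` is the source, represented by
`0 : Fin N`). -/
abbrev Rst (N : ℕ) [NeZero N] : Type := {k : Fin N // k ≠ 0}

section Splits
variable {N : ℕ} [NeZero N]

lemma rst_split {T : Finset (Rst N)} (P : Rst N → Prop) :
    (∀ k : Rst N, P k) ↔ ((∀ j : {j // j ∈ T}, P j.1) ∧ (∀ j : {j // j ∈ Tᶜ}, P j.1)) := by
  constructor
  · exact fun h => ⟨fun j => h j.1, fun j => h j.1⟩
  · rintro ⟨h1, h2⟩ k
    by_cases hk : k ∈ T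
    · exact h1 ⟨k, hk⟩
    · exact h2 ⟨k, Finset.mem_compl.mpr hk⟩

lemma fin_split (P : Fin N → Prop) : (∀ k, P k) ↔ (P 0 ∧ ∀ k : Rst N, P k.1) := by
  constructor
  · exact fun h => ⟨h 0, fun k => h k.1⟩
  · rintro ⟨h0, h⟩ k
    by_cases hk : k = 0
    · subst hk; exact h0
    · exact h ⟨k, hk⟩

end Splits


section PiSum

lemma sum_pi_prod {ι : Type*} [Fintype ι] [DecidableEq ι] {κ : ι → Type*}
    [∀ i, Fintype (κ i)] (f : ∀ i, κ i → ℝ) :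
    ∑ g : ∀ i, κ i, ∏ i, f i (g i) = ∏ i, ∑ j, f i j := by
  rw [Finset.prod_univ_sum, Fintype.piFinset_univ]

end PiSum

section Struct

variable {N : ℕ} [NeZero N] {𝒳 : Fin N → Type} {𝒴 Yh : Rst N → Type}
  [∀ k, Fintype (𝒳 k)] [∀ k, Fintype (𝒴 k)] [∀ k, Fintype (Yh k)]

/-- The full channel-input vector determined by the source symbol and relay symbols. -/
noncomputable def xfa (xr : ∀ k : Rst N, 𝒳 k.1) (a' : 𝒳 0) : ∀ k, 𝒳 k := fun k =>
  if hk : k = 0 then cast (congrArg 𝒳 hk.symm) a' else xr ⟨k, hk⟩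

/-- The full compression-vector determined by its `T` and `Tᶜ` parts. -/
noncomputable def hfa (T : Finset (Rst N)) (hC : ∀ j : {j : Rst N // j ∈ Tᶜ}, Yh j.1)
    (h' : ∀ j : {j : Rst N // j ∈ T}, Yh j.1) : ∀ k : Rst N, Yh k := fun k =>
  if hk : k ∈ T then h' ⟨k, hk⟩ else hC ⟨k, Finset.mem_compl.mpr hk⟩

lemma xfa_zero (xr : ∀ k : Rst N, 𝒳 k.1) (a' : 𝒳 0) : xfa xr a' 0 = a' := by
  simp [xfa]

lemma xfa_rst (xr : ∀ k : Rst N, 𝒳 k.1) (a' : 𝒳 0) (k : Rst N) :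
    xfa xr a' k.1 = xr k := by
  have hk := k.2
  simp [xfa, hk]

lemma xfa_iff (xr : ∀ k : Rst N, 𝒳 k.1) (a' : 𝒳 0) (x : ∀ k, 𝒳 k) :
    x = xfa xr a' ↔ (x 0 = a' ∧ ∀ k : Rst N, x k.1 = xr k) := by
  rw [funext_iff, fin_split (fun k => x k = xfa xr a' k)]
  rw [xfa_zero]
  constructor
  · rintro ⟨h0, h1⟩
    exact ⟨h0, fun k => by rw [h1 k, xfa_rst]⟩
  · rintro ⟨h0, h1⟩
    exact ⟨h0, fun k => by rw [h1 k, xfa_rst]⟩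

lemma hfa_T (T : Finset (Rst N)) (hC : ∀ j : {j : Rst N // j ∈ Tᶜ}, Yh j.1)
    (h' : ∀ j : {j : Rst N // j ∈ T}, Yh j.1) (j : {j : Rst N // j ∈ T}) :
    hfa T hC h' j.1 = h' j := by
  have hj := j.2
  simp [hfa, hj]

lemma hfa_C (T : Finset (Rst N)) (hC : ∀ j : {j : Rst N // j ∈ Tᶜ}, Yh j.1)
    (h' : ∀ j : {j : Rst N // j ∈ T}, Yh j.1) (j : {j : Rst N // j ∈ Tᶜ}) :
    hfa T hC h' j.1 = hC j := by
  have hj : ¬ (j.1 ∈ T) := Finset.mem_compl.mp j.2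
  simp [hfa, hj]

lemma hfa_iff (T : Finset (Rst N)) (hC : ∀ j : {j : Rst N // j ∈ Tᶜ}, Yh j.1)
    (h' : ∀ j : {j : Rst N // j ∈ T}, Yh j.1) (yh : ∀ k : Rst N, Yh k) :
    yh = hfa T hC h' ↔ ((∀ j : {j : Rst N // j ∈ T}, yh j.1 = h' j)
      ∧ ∀ j : {j : Rst N // j ∈ Tᶜ}, yh j.1 = hC j) := by
  rw [funext_iff, rst_split (T := T) (fun k => yh k = hfa T hC h' k)]
  constructor
  · rintro ⟨h1, h2⟩
    exact ⟨fun j => by rw [h1 j, hfa_T], fun j => by rw [h2 j, hfa_C]⟩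
  · rintro ⟨h1, h2⟩
    exact ⟨fun j => by rw [h1 j, hfa_T], fun j => by rw [h2 j, hfa_C]⟩

variable (px : ∀ k, 𝒳 k → ℝ)
  (W : (∀ k, 𝒳 k) → (∀ k : Rst N, 𝒴 k) → ℝ)
  (ph : ∀ k : Rst N, 𝒳 k.1 → 𝒴 k → Yh k → ℝ)
  (μ : (∀ k, 𝒳 k) × (∀ k : Rst N, 𝒴 k) × (∀ k : Rst N, Yh k) → ℝ)

lemma mu_nonneg (hpx0 : ∀ k x, 0 ≤ px k x) (hW0 : ∀ x y, 0 ≤ W x y)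
    (hph0 : ∀ k x y yh, 0 ≤ ph k x y yh)
    (hμ : ∀ x y yh, μ (x, y, yh) =
      (∏ k, px k (x k)) * W x y * ∏ k : Rst N, ph k (x k.1) (y k) (yh k)) :
    ∀ ω, 0 ≤ μ ω := by
  intro ω
  rw [show ω = (ω.1, ω.2.1, ω.2.2) from rfl, hμ]
  apply mul_nonneg (mul_nonneg ?_ ?_) ?_
  · exact Finset.prod_nonneg fun k _ => hpx0 k _
  · exact hW0 _ _
  · exact Finset.prod_nonneg fun k _ => hph0 k _ _ _

lemma mu_sum_one (hpx1 : ∀ k, ∑ x, px k x = 1) (hW1 : ∀ x, ∑ y, W x y = 1)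
    (hph1 : ∀ k x y, ∑ yh, ph k x y yh = 1)
    (hμ : ∀ x y yh, μ (x, y, yh) =
      (∏ k, px k (x k)) * W x y * ∏ k : Rst N, ph k (x k.1) (y k) (yh k)) :
    ∑ ω, μ ω = 1 := by
  rw [Fintype.sum_prod_type]
  have hx : ∀ x, (∑ q : (∀ k : Rst N, 𝒴 k) × (∀ k : Rst N, Yh k), μ (x, q))
      = ∏ k, px k (x k) := by
    intro x
    rw [Fintype.sum_prod_type]
    have hin : ∀ y : (∀ k : Rst N, 𝒴 k), (∑ yh, μ (x, y, yh))
        = (∏ k, px k (x k)) * W x y := by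
      intro y
      have h1 : (∑ yh : (∀ k : Rst N, Yh k), ∏ k : Rst N, ph k (x k.1) (y k) (yh k))
          = 1 := by
        rw [sum_pi_prod (f := fun k v => ph k (x k.1) (y k) v)]
        exact Finset.prod_eq_one fun k _ => hph1 k _ _
      calc (∑ yh, μ (x, y, yh))
          = ∑ yh, (∏ k, px k (x k)) * W x y * ∏ k : Rst N, ph k (x k.1) (y k) (yh k) :=
            Finset.sum_congr rfl fun yh _ => hμ x y yh
        _ = (∏ k, px k (x k)) * W x y
              * ∑ yh : (∀ k : Rst N, Yh k), ∏ k : Rst N, ph k (x k.1) (y k) (yh k) := by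
            rw [Finset.mul_sum]
        _ = (∏ k, px k (x k)) * W x y := by rw [h1, mul_one]
    calc (∑ y, ∑ yh, μ (x, y, yh))
        = ∑ y, (∏ k, px k (x k)) * W x y := Finset.sum_congr rfl fun y _ => hin y
      _ = (∏ k, px k (x k)) * ∑ y, W x y := by rw [Finset.mul_sum]
      _ = ∏ k, px k (x k) := by rw [hW1 x, mul_one]
  calc (∑ x, ∑ q : (∀ k : Rst N, 𝒴 k) × (∀ k : Rst N, Yh k), μ (x, q))
      = ∑ x, ∏ k, px k (x k) := Finset.sum_congr rfl fun x _ => hx x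
    _ = ∏ k, ∑ v, px k v := sum_pi_prod (f := fun k v => px k v)
    _ = 1 := Finset.prod_eq_one fun k _ => hpx1 k

end Struct

section

variable {N : ℕ} [NeZero N] {𝒳 : Fin N → Type} {𝒴 Yh : Rst N → Type}
  [∀ k, Fintype (𝒳 k)] [∀ k, Fintype (𝒴 k)] [∀ k, Fintype (Yh k)]
  (μ : (∀ k, 𝒳 k) × (∀ k : Rst N, 𝒴 k) × (∀ k : Rst N, Yh k) → ℝ)

/-- The compress–forward objective `I(X₁; Ŷ₂ᴺ, Y_d | X₂ᴺ)`. -/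
noncomputable def cfObj (d : Rst N) : ℝ :=
  condMI μ (fun ω => ω.1 0) (fun ω => (ω.2.2, ω.2.1 d))
    (fun ω => fun k : Rst N => ω.1 k.1)

/-- The noisy network coding objective
`I(X₁, X(T); Ŷ(Tᶜ), Y_d | X(Tᶜ), X_d) − I(Y(T); Ŷ(T) | X^N, Ŷ(Tᶜ), Y_d)`
for destination `d` and cut `T ⊆ [2:N]`, where `Tᶜ = [2:N] \ T`. -/
noncomputable def nncObj (d : Rst N) (T : Finset (Rst N)) : ℝ :=
  condMI μ
      (fun ω => (ω.1 0, fun j : {j // j ∈ T} => ω.1 j.1.1))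
      (fun ω => ((fun j : {j // j ∈ Tᶜ} => ω.2.2 j.1), ω.2.1 d))
      (fun ω => ((fun j : {j // j ∈ Tᶜ} => ω.1 j.1.1), ω.1 d.1))
    - condMI μ
      (fun ω => fun j : {j // j ∈ T} => ω.2.1 j.1)
      (fun ω => fun j : {j // j ∈ T} => ω.2.2 j.1)
      (fun ω => (ω.1, (fun j : {j // j ∈ Tᶜ} => ω.2.2 j.1), ω.2.1 d))

/-- The compress–forward expression for destination `d` and cut `T`:
`I(X₁; Ŷ₂ᴺ, Y_d | X₂ᴺ) + I(X(T); Y_d | X(Tᶜ), X_d)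
  − I(Ŷ(T); Y(T) | X₂ᴺ, Ŷ(Tᶜ), Y_d) − Σ_{k∈T} I(X₂ᴺ; Ŷ_k | X_k)`. -/
noncomputable def cfExpr (d : Rst N) (T : Finset (Rst N)) : ℝ :=
  cfObj μ d
    + condMI μ
      (fun ω => fun j : {j // j ∈ T} => ω.1 j.1.1)
      (fun ω => ω.2.1 d)
      (fun ω => ((fun j : {j // j ∈ Tᶜ} => ω.1 j.1.1), ω.1 d.1))
    - condMI μ
      (fun ω => fun j : {j // j ∈ T} => ω.2.2 j.1)
      (fun ω => fun j : {j // j ∈ T} => ω.2.1 j.1)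
      (fun ω => ((fun k : Rst N => ω.1 k.1),
                 (fun j : {j // j ∈ Tᶜ} => ω.2.2 j.1), ω.2.1 d))
    - ∑ k ∈ T, condMI μ
        (fun ω => fun j : Rst N => ω.1 j.1) (fun ω => ω.2.2 k) (fun ω => ω.1 k.1)

/-- The gap `I(X(T); Ŷ(Tᶜ) | X(Tᶜ), Y_d, X_d) + Σ_{k∈T} I(Ŷ_k; X₂ᴺ | X_k)` by which
the noisy network coding expression exceeds the compress–forward expression. -/
noncomputable def gapExpr (d : Rst N) (T : Finset (Rst N)) : ℝ :=
  condMI μ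
      (fun ω => fun j : {j // j ∈ T} => ω.1 j.1.1)
      (fun ω => fun j : {j // j ∈ Tᶜ} => ω.2.2 j.1)
      (fun ω => ((fun j : {j // j ∈ Tᶜ} => ω.1 j.1.1), ω.2.1 d, ω.1 d.1))
    + ∑ k ∈ T, condMI μ
        (fun ω => ω.2.2 k) (fun ω => fun j : Rst N => ω.1 j.1) (fun ω => ω.1 k.1)

/-- The Kramer–Gastpar–Gupta compress–forward constraint
`I(Y(T); Ŷ(T) | X₂ᴺ, Ŷ(Tᶜ), Y_d) + Σ_{k∈T} I(X₂ᴺ; Ŷ_k | X_k)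
  ≤ I(X(T); Y_d | X(Tᶜ), X_d)`. -/
def cfConstraint (d : Rst N) (T : Finset (Rst N)) : Prop :=
  condMI μ
      (fun ω => fun j : {j // j ∈ T} => ω.2.1 j.1)
      (fun ω => fun j : {j // j ∈ T} => ω.2.2 j.1)
      (fun ω => ((fun k : Rst N => ω.1 k.1),
                 (fun j : {j // j ∈ Tᶜ} => ω.2.2 j.1), ω.2.1 d))
    + ∑ k ∈ T, condMI μ
        (fun ω => fun j : Rst N => ω.1 j.1) (fun ω => ω.2.2 k) (fun ω => ω.1 k.1)
  ≤ condMI μ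
      (fun ω => fun j : {j // j ∈ T} => ω.1 j.1.1)
      (fun ω => ω.2.1 d)
      (fun ω => ((fun j : {j // j ∈ Tᶜ} => ω.1 j.1.1), ω.1 d.1))

/-- The extra conditional mutual information `I(X₁; Ŷ(T) | X₂ᴺ, Y(T), Ŷ(Tᶜ), Y_d)`. -/
noncomputable def extraMI (d : Rst N) (T : Finset (Rst N)) : ℝ :=
  condMI μ (fun ω => ω.1 0) (fun ω => fun j : {j // j ∈ T} => ω.2.2 j.1)
    (fun ω => ((fun k : Rst N => ω.1 k.1), (fun j : {j // j ∈ T} => ω.2.1 j.1),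
      (fun j : {j // j ∈ Tᶜ} => ω.2.2 j.1), ω.2.1 d))

lemma key_identity (d : Rst N) (T : Finset (Rst N)) :
    nncObj μ d T + extraMI μ d T = cfExpr μ d T + gapExpr μ d T := by
  have hsum : (∑ k ∈ T, condMI μ
        (fun ω => ω.2.2 k) (fun ω => fun j : Rst N => ω.1 j.1) (fun ω => ω.1 k.1))
      = ∑ k ∈ T, condMI μ
        (fun ω => fun j : Rst N => ω.1 j.1) (fun ω => ω.2.2 k) (fun ω => ω.1 k.1) :=
    Finset.sum_congr rfl fun k _ => condMI_symm μ _ _ _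
  have hC1 : ent μ (fun ω => ((ω.1 0, (fun j : {j // j ∈ T} => ω.1 j.1.1)), ((fun j : {j // j ∈ Tᶜ} => ω.1 j.1.1), ω.1 d.1))) = ent μ (fun ω => (ω.1 0, (fun k : Rst N => ω.1 k.1))) := by
    refine ent_congr μ ?_
    intro ω ω'
    have e1 := rst_split (T := T) (fun k : Rst N => ω.1 k.1 = ω'.1 k.1)
    have e2 := rst_split (T := T) (fun k : Rst N => ω.2.2 k = ω'.2.2 k)
    have e3 := fin_split (fun k : Fin N => ω.1 k = ω'.1 k)
    have e4 : (∀ j : {j // j ∈ T}, ω.1 j.1.1 = ω'.1 j.1.1) →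
        (∀ j : {j // j ∈ Tᶜ}, ω.1 j.1.1 = ω'.1 j.1.1) → ω.1 d.1 = ω'.1 d.1 := by
      intro h1 h2
      by_cases hd : d ∈ T
      · exact h1 ⟨d, hd⟩
      · exact h2 ⟨d, Finset.mem_compl.mpr hd⟩
    simp only [Prod.mk.injEq, funext_iff]
    tauto
  have hC2 : ent μ (fun ω => (((fun j : {j // j ∈ Tᶜ} => ω.2.2 j.1), ω.2.1 d), ((fun j : {j // j ∈ Tᶜ} => ω.1 j.1.1), ω.1 d.1))) = ent μ (fun ω => ((fun j : {j // j ∈ Tᶜ} => ω.2.2 j.1), ((fun j : {j // j ∈ Tᶜ} => ω.1 j.1.1), ω.2.1 d, ω.1 d.1))) := by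
    refine ent_congr μ ?_
    intro ω ω'
    have e1 := rst_split (T := T) (fun k : Rst N => ω.1 k.1 = ω'.1 k.1)
    have e2 := rst_split (T := T) (fun k : Rst N => ω.2.2 k = ω'.2.2 k)
    have e3 := fin_split (fun k : Fin N => ω.1 k = ω'.1 k)
    have e4 : (∀ j : {j // j ∈ T}, ω.1 j.1.1 = ω'.1 j.1.1) →
        (∀ j : {j // j ∈ Tᶜ}, ω.1 j.1.1 = ω'.1 j.1.1) → ω.1 d.1 = ω'.1 d.1 := by
      intro h1 h2
      by_cases hd : d ∈ T
      · exact h1 ⟨d, hd⟩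
      · exact h2 ⟨d, Finset.mem_compl.mpr hd⟩
    simp only [Prod.mk.injEq, funext_iff]
    tauto
  have hC3 : ent μ (fun ω => ((ω.1 0, (fun j : {j // j ∈ T} => ω.1 j.1.1)), ((fun j : {j // j ∈ Tᶜ} => ω.2.2 j.1), ω.2.1 d), ((fun j : {j // j ∈ Tᶜ} => ω.1 j.1.1), ω.1 d.1))) = ent μ (fun ω => (ω.1, (fun j : {j // j ∈ Tᶜ} => ω.2.2 j.1), ω.2.1 d)) := by
    refine ent_congr μ ?_
    intro ω ω'
    have e1 := rst_split (T := T) (fun k : Rst N => ω.1 k.1 = ω'.1 k.1)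
    have e2 := rst_split (T := T) (fun k : Rst N => ω.2.2 k = ω'.2.2 k)
    have e3 := fin_split (fun k : Fin N => ω.1 k = ω'.1 k)
    have e4 : (∀ j : {j // j ∈ T}, ω.1 j.1.1 = ω'.1 j.1.1) →
        (∀ j : {j // j ∈ Tᶜ}, ω.1 j.1.1 = ω'.1 j.1.1) → ω.1 d.1 = ω'.1 d.1 := by
      intro h1 h2
      by_cases hd : d ∈ T
      · exact h1 ⟨d, hd⟩
      · exact h2 ⟨d, Finset.mem_compl.mpr hd⟩
    simp only [Prod.mk.injEq, funext_iff]
    tauto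
  have hC5 : ent μ (fun ω => ((fun j : {j // j ∈ T} => ω.2.1 j.1), (ω.1, (fun j : {j // j ∈ Tᶜ} => ω.2.2 j.1), ω.2.1 d))) = ent μ (fun ω => (ω.1 0, ((fun k : Rst N => ω.1 k.1), (fun j : {j // j ∈ T} => ω.2.1 j.1), (fun j : {j // j ∈ Tᶜ} => ω.2.2 j.1), ω.2.1 d))) := by
    refine ent_congr μ ?_
    intro ω ω'
    have e1 := rst_split (T := T) (fun k : Rst N => ω.1 k.1 = ω'.1 k.1)
    have e2 := rst_split (T := T) (fun k : Rst N => ω.2.2 k = ω'.2.2 k)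
    have e3 := fin_split (fun k : Fin N => ω.1 k = ω'.1 k)
    have e4 : (∀ j : {j // j ∈ T}, ω.1 j.1.1 = ω'.1 j.1.1) →
        (∀ j : {j // j ∈ Tᶜ}, ω.1 j.1.1 = ω'.1 j.1.1) → ω.1 d.1 = ω'.1 d.1 := by
      intro h1 h2
      by_cases hd : d ∈ T
      · exact h1 ⟨d, hd⟩
      · exact h2 ⟨d, Finset.mem_compl.mpr hd⟩
    simp only [Prod.mk.injEq, funext_iff]
    tauto
  have hC6 : ent μ (fun ω => ((fun j : {j // j ∈ T} => ω.2.2 j.1), (ω.1, (fun j : {j // j ∈ Tᶜ} => ω.2.2 j.1), ω.2.1 d))) = ent μ (fun ω => (ω.1 0, (ω.2.2, ω.2.1 d), (fun k : Rst N => ω.1 k.1))) := by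
    refine ent_congr μ ?_
    intro ω ω'
    have e1 := rst_split (T := T) (fun k : Rst N => ω.1 k.1 = ω'.1 k.1)
    have e2 := rst_split (T := T) (fun k : Rst N => ω.2.2 k = ω'.2.2 k)
    have e3 := fin_split (fun k : Fin N => ω.1 k = ω'.1 k)
    have e4 : (∀ j : {j // j ∈ T}, ω.1 j.1.1 = ω'.1 j.1.1) →
        (∀ j : {j // j ∈ Tᶜ}, ω.1 j.1.1 = ω'.1 j.1.1) → ω.1 d.1 = ω'.1 d.1 := by
      intro h1 h2
      by_cases hd : d ∈ T
      · exact h1 ⟨d, hd⟩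
      · exact h2 ⟨d, Finset.mem_compl.mpr hd⟩
    simp only [Prod.mk.injEq, funext_iff]
    tauto
  have hC7 : ent μ (fun ω => ((fun j : {j // j ∈ T} => ω.2.1 j.1), (fun j : {j // j ∈ T} => ω.2.2 j.1), (ω.1, (fun j : {j // j ∈ Tᶜ} => ω.2.2 j.1), ω.2.1 d))) = ent μ (fun ω => (ω.1 0, (fun j : {j // j ∈ T} => ω.2.2 j.1), ((fun k : Rst N => ω.1 k.1), (fun j : {j // j ∈ T} => ω.2.1 j.1), (fun j : {j // j ∈ Tᶜ} => ω.2.2 j.1), ω.2.1 d))) := by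
    refine ent_congr μ ?_
    intro ω ω'
    have e1 := rst_split (T := T) (fun k : Rst N => ω.1 k.1 = ω'.1 k.1)
    have e2 := rst_split (T := T) (fun k : Rst N => ω.2.2 k = ω'.2.2 k)
    have e3 := fin_split (fun k : Fin N => ω.1 k = ω'.1 k)
    have e4 : (∀ j : {j // j ∈ T}, ω.1 j.1.1 = ω'.1 j.1.1) →
        (∀ j : {j // j ∈ Tᶜ}, ω.1 j.1.1 = ω'.1 j.1.1) → ω.1 d.1 = ω'.1 d.1 := by
      intro h1 h2
      by_cases hd : d ∈ T
      · exact h1 ⟨d, hd⟩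
      · exact h2 ⟨d, Finset.mem_compl.mpr hd⟩
    simp only [Prod.mk.injEq, funext_iff]
    tauto
  have hC8 : ent μ (fun ω => ((ω.2.2, ω.2.1 d), (fun k : Rst N => ω.1 k.1))) = ent μ (fun ω => ((fun j : {j // j ∈ T} => ω.2.2 j.1), ((fun k : Rst N => ω.1 k.1), (fun j : {j // j ∈ Tᶜ} => ω.2.2 j.1), ω.2.1 d))) := by
    refine ent_congr μ ?_
    intro ω ω'
    have e1 := rst_split (T := T) (fun k : Rst N => ω.1 k.1 = ω'.1 k.1)
    have e2 := rst_split (T := T) (fun k : Rst N => ω.2.2 k = ω'.2.2 k)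
    have e3 := fin_split (fun k : Fin N => ω.1 k = ω'.1 k)
    have e4 : (∀ j : {j // j ∈ T}, ω.1 j.1.1 = ω'.1 j.1.1) →
        (∀ j : {j // j ∈ Tᶜ}, ω.1 j.1.1 = ω'.1 j.1.1) → ω.1 d.1 = ω'.1 d.1 := by
      intro h1 h2
      by_cases hd : d ∈ T
      · exact h1 ⟨d, hd⟩
      · exact h2 ⟨d, Finset.mem_compl.mpr hd⟩
    simp only [Prod.mk.injEq, funext_iff]
    tauto
  have hC9 : ent μ (fun ω => (fun k : Rst N => ω.1 k.1)) = ent μ (fun ω => ((fun j : {j // j ∈ T} => ω.1 j.1.1), ((fun j : {j // j ∈ Tᶜ} => ω.1 j.1.1), ω.1 d.1))) := by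
    refine ent_congr μ ?_
    intro ω ω'
    have e1 := rst_split (T := T) (fun k : Rst N => ω.1 k.1 = ω'.1 k.1)
    have e2 := rst_split (T := T) (fun k : Rst N => ω.2.2 k = ω'.2.2 k)
    have e3 := fin_split (fun k : Fin N => ω.1 k = ω'.1 k)
    have e4 : (∀ j : {j // j ∈ T}, ω.1 j.1.1 = ω'.1 j.1.1) →
        (∀ j : {j // j ∈ Tᶜ}, ω.1 j.1.1 = ω'.1 j.1.1) → ω.1 d.1 = ω'.1 d.1 := by
      intro h1 h2
      by_cases hd : d ∈ T
      · exact h1 ⟨d, hd⟩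
      · exact h2 ⟨d, Finset.mem_compl.mpr hd⟩
    simp only [Prod.mk.injEq, funext_iff]
    tauto
  have hC10 : ent μ (fun ω => (ω.2.1 d, ((fun j : {j // j ∈ Tᶜ} => ω.1 j.1.1), ω.1 d.1))) = ent μ (fun ω => ((fun j : {j // j ∈ Tᶜ} => ω.1 j.1.1), ω.2.1 d, ω.1 d.1)) := by
    refine ent_congr μ ?_
    intro ω ω'
    have e1 := rst_split (T := T) (fun k : Rst N => ω.1 k.1 = ω'.1 k.1)
    have e2 := rst_split (T := T) (fun k : Rst N => ω.2.2 k = ω'.2.2 k)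
    have e3 := fin_split (fun k : Fin N => ω.1 k = ω'.1 k)
    have e4 : (∀ j : {j // j ∈ T}, ω.1 j.1.1 = ω'.1 j.1.1) →
        (∀ j : {j // j ∈ Tᶜ}, ω.1 j.1.1 = ω'.1 j.1.1) → ω.1 d.1 = ω'.1 d.1 := by
      intro h1 h2
      by_cases hd : d ∈ T
      · exact h1 ⟨d, hd⟩
      · exact h2 ⟨d, Finset.mem_compl.mpr hd⟩
    simp only [Prod.mk.injEq, funext_iff]
    tauto
  have hC11 : ent μ (fun ω => ((fun j : {j // j ∈ T} => ω.1 j.1.1), ω.2.1 d, ((fun j : {j // j ∈ Tᶜ} => ω.1 j.1.1), ω.1 d.1))) = ent μ (fun ω => ((fun j : {j // j ∈ T} => ω.1 j.1.1), ((fun j : {j // j ∈ Tᶜ} => ω.1 j.1.1), ω.2.1 d, ω.1 d.1))) := by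
    refine ent_congr μ ?_
    intro ω ω'
    have e1 := rst_split (T := T) (fun k : Rst N => ω.1 k.1 = ω'.1 k.1)
    have e2 := rst_split (T := T) (fun k : Rst N => ω.2.2 k = ω'.2.2 k)
    have e3 := fin_split (fun k : Fin N => ω.1 k = ω'.1 k)
    have e4 : (∀ j : {j // j ∈ T}, ω.1 j.1.1 = ω'.1 j.1.1) →
        (∀ j : {j // j ∈ Tᶜ}, ω.1 j.1.1 = ω'.1 j.1.1) → ω.1 d.1 = ω'.1 d.1 := by
      intro h1 h2
      by_cases hd : d ∈ T
      · exact h1 ⟨d, hd⟩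
      · exact h2 ⟨d, Finset.mem_compl.mpr hd⟩
    simp only [Prod.mk.injEq, funext_iff]
    tauto
  have hC12 : ent μ (fun ω => ((fun j : {j // j ∈ T} => ω.2.1 j.1), ((fun k : Rst N => ω.1 k.1), (fun j : {j // j ∈ Tᶜ} => ω.2.2 j.1), ω.2.1 d))) = ent μ (fun ω => ((fun k : Rst N => ω.1 k.1), (fun j : {j // j ∈ T} => ω.2.1 j.1), (fun j : {j // j ∈ Tᶜ} => ω.2.2 j.1), ω.2.1 d)) := by
    refine ent_congr μ ?_
    intro ω ω'
    have e1 := rst_split (T := T) (fun k : Rst N => ω.1 k.1 = ω'.1 k.1)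
    have e2 := rst_split (T := T) (fun k : Rst N => ω.2.2 k = ω'.2.2 k)
    have e3 := fin_split (fun k : Fin N => ω.1 k = ω'.1 k)
    have e4 : (∀ j : {j // j ∈ T}, ω.1 j.1.1 = ω'.1 j.1.1) →
        (∀ j : {j // j ∈ Tᶜ}, ω.1 j.1.1 = ω'.1 j.1.1) → ω.1 d.1 = ω'.1 d.1 := by
      intro h1 h2
      by_cases hd : d ∈ T
      · exact h1 ⟨d, hd⟩
      · exact h2 ⟨d, Finset.mem_compl.mpr hd⟩
    simp only [Prod.mk.injEq, funext_iff]
    tauto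
  have hC13 : ent μ (fun ω => ((fun j : {j // j ∈ T} => ω.2.2 j.1), (fun j : {j // j ∈ T} => ω.2.1 j.1), ((fun k : Rst N => ω.1 k.1), (fun j : {j // j ∈ Tᶜ} => ω.2.2 j.1), ω.2.1 d))) = ent μ (fun ω => ((fun j : {j // j ∈ T} => ω.2.2 j.1), ((fun k : Rst N => ω.1 k.1), (fun j : {j // j ∈ T} => ω.2.1 j.1), (fun j : {j // j ∈ Tᶜ} => ω.2.2 j.1), ω.2.1 d))) := by
    refine ent_congr μ ?_
    intro ω ω'
    have e1 := rst_split (T := T) (fun k : Rst N => ω.1 k.1 = ω'.1 k.1)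
    have e2 := rst_split (T := T) (fun k : Rst N => ω.2.2 k = ω'.2.2 k)
    have e3 := fin_split (fun k : Fin N => ω.1 k = ω'.1 k)
    have e4 : (∀ j : {j // j ∈ T}, ω.1 j.1.1 = ω'.1 j.1.1) →
        (∀ j : {j // j ∈ Tᶜ}, ω.1 j.1.1 = ω'.1 j.1.1) → ω.1 d.1 = ω'.1 d.1 := by
      intro h1 h2
      by_cases hd : d ∈ T
      · exact h1 ⟨d, hd⟩
      · exact h2 ⟨d, Finset.mem_compl.mpr hd⟩
    simp only [Prod.mk.injEq, funext_iff]
    tauto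
  have hC14 : ent μ (fun ω => ((fun k : Rst N => ω.1 k.1), (fun j : {j // j ∈ Tᶜ} => ω.2.2 j.1), ω.2.1 d)) = ent μ (fun ω => ((fun j : {j // j ∈ T} => ω.1 j.1.1), (fun j : {j // j ∈ Tᶜ} => ω.2.2 j.1), ((fun j : {j // j ∈ Tᶜ} => ω.1 j.1.1), ω.2.1 d, ω.1 d.1))) := by
    refine ent_congr μ ?_
    intro ω ω'
    have e1 := rst_split (T := T) (fun k : Rst N => ω.1 k.1 = ω'.1 k.1)
    have e2 := rst_split (T := T) (fun k : Rst N => ω.2.2 k = ω'.2.2 k)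
    have e3 := fin_split (fun k : Fin N => ω.1 k = ω'.1 k)
    have e4 : (∀ j : {j // j ∈ T}, ω.1 j.1.1 = ω'.1 j.1.1) →
        (∀ j : {j // j ∈ Tᶜ}, ω.1 j.1.1 = ω'.1 j.1.1) → ω.1 d.1 = ω'.1 d.1 := by
      intro h1 h2
      by_cases hd : d ∈ T
      · exact h1 ⟨d, hd⟩
      · exact h2 ⟨d, Finset.mem_compl.mpr hd⟩
    simp only [Prod.mk.injEq, funext_iff]
    tauto
  unfold nncObj extraMI cfExpr gapExpr cfObj
  rw [hsum]
  unfold condMI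
  beta_reduce
  rw [hC1, hC2, hC3, hC5, hC6, hC7, hC8, hC9, hC10, hC11, hC12, hC13, hC14]
  ring

end

section ExtraZero

variable {N : ℕ} [NeZero N] {𝒳 : Fin N → Type} {𝒴 Yh : Rst N → Type}
  [∀ k, Fintype (𝒳 k)] [∀ k, Fintype (𝒴 k)] [∀ k, Fintype (Yh k)]
  (px : ∀ k, 𝒳 k → ℝ)
  (W : (∀ k, 𝒳 k) → (∀ k : Rst N, 𝒴 k) → ℝ)
  (ph : ∀ k : Rst N, 𝒳 k.1 → 𝒴 k → Yh k → ℝ)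
  (μ : (∀ k, 𝒳 k) × (∀ k : Rst N, 𝒴 k) × (∀ k : Rst N, Yh k) → ℝ)

lemma extraMI_eq_zero
    (hpx0 : ∀ k x, 0 ≤ px k x) (hW0 : ∀ x y, 0 ≤ W x y)
    (hph0 : ∀ k x y yh, 0 ≤ ph k x y yh) (hph1 : ∀ k x y, ∑ yh, ph k x y yh = 1)
    (hμ : ∀ x y yh, μ (x, y, yh) =
      (∏ k, px k (x k)) * W x y * ∏ k : Rst N, ph k (x k.1) (y k) (yh k))
    (d : Rst N) (T : Finset (Rst N)) :
    extraMI μ d T = 0 := by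
  classical
  have hμ0 := mu_nonneg px W ph μ hpx0 hW0 hph0 hμ
  unfold extraMI
  refine condMI_eq_zero μ _ _ _ hμ0 ?_
  rintro a h ⟨xr, yT, hC, yd⟩
  set Pr : (∀ k : Rst N, 𝒴 k) → Prop := fun y =>
    (fun j : {j : Rst N // j ∈ T} => y j.1) = yT ∧ y d = yd with hPr
  set F : (∀ j : {j : Rst N // j ∈ T}, Yh j.1) → ℝ := fun h' =>
    ∏ j : {j : Rst N // j ∈ T}, ph j.1 (xr j.1) (yT j) (h' j) with hF
  set G : 𝒳 0 → ℝ := fun a' => ∑ y, if Pr y then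
    (∏ k, px k (xfa xr a' k)) * W (xfa xr a') y
      * ∏ j : {j : Rst N // j ∈ Tᶜ}, ph j.1 (xr j.1) (y j.1) (hC j) else 0 with hG
  -- the joint probability factorises
  have hP3 : ∀ (a' : 𝒳 0) (h' : ∀ j : {j : Rst N // j ∈ T}, Yh j.1),
      prob μ (fun ω => ((fun ω => ω.1 0) ω, (fun ω => fun j : {j // j ∈ T} => ω.2.2 j.1) ω,
        (fun ω => ((fun k : Rst N => ω.1 k.1), (fun j : {j // j ∈ T} => ω.2.1 j.1),
          (fun j : {j // j ∈ Tᶜ} => ω.2.2 j.1), ω.2.1 d)) ω))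
        (a', h', (xr, yT, hC, yd)) = F h' * G a' := by
    intro a' h'
    have key : prob μ (fun ω => ((fun ω => ω.1 0) ω, (fun ω => fun j : {j // j ∈ T} => ω.2.2 j.1) ω,
        (fun ω => ((fun k : Rst N => ω.1 k.1), (fun j : {j // j ∈ T} => ω.2.1 j.1),
          (fun j : {j // j ∈ Tᶜ} => ω.2.2 j.1), ω.2.1 d)) ω))
        (a', h', (xr, yT, hC, yd))
        = ∑ y, (if Pr y then μ (xfa xr a', y, hfa T hC h') else 0) := by
      unfold prob
      rw [Fintype.sum_prod_type]
      refine Eq.trans (Finset.sum_congr rfl fun x _ => ?_)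
        (Fintype.sum_ite_eq' (xfa xr a')
          (fun x => ∑ y, (if Pr y then μ (x, y, hfa T hC h') else 0)))
      rw [Fintype.sum_prod_type]
      by_cases hxx : x = xfa xr a'
      · rw [if_pos hxx]
        refine Finset.sum_congr rfl fun y _ => ?_
        refine Eq.trans (Finset.sum_congr rfl fun yh _ => ?_)
          (Fintype.sum_ite_eq' (hfa T hC h')
            (fun yh => if Pr y then μ (x, y, yh) else 0))
        have hbig_iff : ((x 0, (fun j : {j : Rst N // j ∈ T} => yh j.1),
            ((fun k : Rst N => x k.1), (fun j : {j : Rst N // j ∈ T} => y j.1),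
             (fun j : {j : Rst N // j ∈ Tᶜ} => yh j.1), y d))
            = (a', h', (xr, yT, hC, yd)))
            ↔ (yh = hfa T hC h' ∧ Pr y) := by
          have hx0 : x 0 = a' := ((xfa_iff xr a' x).mp hxx).1
          have hxk : ∀ k : Rst N, x k.1 = xr k := ((xfa_iff xr a' x).mp hxx).2
          rw [hfa_iff]
          simp only [Prod.mk.injEq, hPr, funext_iff]
          constructor
          · rintro ⟨h1, h2, h3, h4, h5, h6⟩
            exact ⟨⟨h2, h5⟩, h4, h6⟩
          · rintro ⟨⟨h2, h5⟩, h4, h6⟩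
            exact ⟨hx0, h2, hxk, h4, h5, h6⟩
        simp only [hbig_iff]
        by_cases h1 : yh = hfa T hC h' <;> by_cases h2 : Pr y <;>
          simp [h1, h2]
      · rw [if_neg hxx]
        refine Finset.sum_eq_zero fun y _ => Finset.sum_eq_zero fun yh _ => ?_
        refine if_neg fun hc => ?_
        apply hxx
        simp only [Prod.mk.injEq] at hc
        rw [xfa_iff]
        exact ⟨hc.1, fun k => congrFun hc.2.2.1 k⟩
    rw [key]
    have hterm : ∀ y, (if Pr y then μ (xfa xr a', y, hfa T hC h') else 0)
        = F h' * (if Pr y then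
            (∏ k, px k (xfa xr a' k)) * W (xfa xr a') y
              * ∏ j : {j : Rst N // j ∈ Tᶜ}, ph j.1 (xr j.1) (y j.1) (hC j) else 0) := by
      intro y
      by_cases hy : Pr y
      · rw [if_pos hy, if_pos hy, hμ]
        have hyT : ∀ j : {j : Rst N // j ∈ T}, y j.1 = yT j := by
          intro j
          have := hy.1
          rw [hPr] at hy
          exact congrFun hy.1 j
        have hsplit : (∏ k : Rst N, ph k (xfa xr a' k.1) (y k) (hfa T hC h' k))
            = F h' * ∏ j : {j : Rst N // j ∈ Tᶜ}, ph j.1 (xr j.1) (y j.1) (hC j) := by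
          rw [← Finset.prod_mul_prod_compl T
            (fun k : Rst N => ph k (xfa xr a' k.1) (y k) (hfa T hC h' k))]
          congr 1
          · rw [← Finset.prod_coe_sort T
              (fun k : Rst N => ph k (xfa xr a' k.1) (y k) (hfa T hC h' k)), hF]
            refine Finset.prod_congr rfl fun j _ => ?_
            rw [xfa_rst, hfa_T, hyT j]
          · rw [← Finset.prod_coe_sort Tᶜ
              (fun k : Rst N => ph k (xfa xr a' k.1) (y k) (hfa T hC h' k))]
            refine Finset.prod_congr rfl fun j _ => ?_
            rw [xfa_rst, hfa_C]
        rw [hsplit]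
        ring
      · rw [if_neg hy, if_neg hy, mul_zero]
    calc (∑ y, if Pr y then μ (xfa xr a', y, hfa T hC h') else 0)
        = ∑ y, F h' * (if Pr y then
            (∏ k, px k (xfa xr a' k)) * W (xfa xr a') y
              * ∏ j : {j : Rst N // j ∈ Tᶜ}, ph j.1 (xr j.1) (y j.1) (hC j) else 0) :=
          Finset.sum_congr rfl fun y _ => hterm y
      _ = F h' * G a' := by rw [← Finset.mul_sum, hG]
  -- sum of F over all compression indices is 1
  have hF1 : (∑ h' : ∀ j : {j : Rst N // j ∈ T}, Yh j.1, F h') = 1 := by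
    rw [hF]
    rw [sum_pi_prod (f := fun (j : {j : Rst N // j ∈ T}) v => ph j.1 (xr j.1) (yT j) v)]
    exact Finset.prod_eq_one fun j _ => hph1 j.1 _ _
  -- now verify the product identity
  rw [prob_XZ_eq μ (fun ω => ω.1 0) (fun ω => fun j : {j // j ∈ T} => ω.2.2 j.1)
      (fun ω => ((fun k : Rst N => ω.1 k.1), (fun j : {j // j ∈ T} => ω.2.1 j.1),
        (fun j : {j // j ∈ Tᶜ} => ω.2.2 j.1), ω.2.1 d)) a (xr, yT, hC, yd),
    prob_YZ_eq μ (fun ω => ω.1 0) (fun ω => fun j : {j // j ∈ T} => ω.2.2 j.1)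
      (fun ω => ((fun k : Rst N => ω.1 k.1), (fun j : {j // j ∈ T} => ω.2.1 j.1),
        (fun j : {j // j ∈ Tᶜ} => ω.2.2 j.1), ω.2.1 d)) h (xr, yT, hC, yd),
    prob_Z_eq μ (fun ω => ω.1 0) (fun ω => fun j : {j // j ∈ T} => ω.2.2 j.1)
      (fun ω => ((fun k : Rst N => ω.1 k.1), (fun j : {j // j ∈ T} => ω.2.1 j.1),
        (fun j : {j // j ∈ Tᶜ} => ω.2.2 j.1), ω.2.1 d)) (xr, yT, hC, yd)]
  have e1 : (∑ h' : ∀ j : {j : Rst N // j ∈ T}, Yh j.1,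
      prob μ (fun ω => ((fun ω => ω.1 0) ω, (fun ω => fun j : {j // j ∈ T} => ω.2.2 j.1) ω,
        (fun ω => ((fun k : Rst N => ω.1 k.1), (fun j : {j // j ∈ T} => ω.2.1 j.1),
          (fun j : {j // j ∈ Tᶜ} => ω.2.2 j.1), ω.2.1 d)) ω))
        (a, h', (xr, yT, hC, yd))) = G a := by
    calc _ = ∑ h' : ∀ j : {j : Rst N // j ∈ T}, Yh j.1, F h' * G a :=
          Finset.sum_congr rfl fun h' _ => hP3 a h'
      _ = (∑ h' : ∀ j : {j : Rst N // j ∈ T}, Yh j.1, F h') * G a := by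
          rw [Finset.sum_mul]
      _ = G a := by rw [hF1, one_mul]
  have e2 : (∑ a' : 𝒳 0,
      prob μ (fun ω => ((fun ω => ω.1 0) ω, (fun ω => fun j : {j // j ∈ T} => ω.2.2 j.1) ω,
        (fun ω => ((fun k : Rst N => ω.1 k.1), (fun j : {j // j ∈ T} => ω.2.1 j.1),
          (fun j : {j // j ∈ Tᶜ} => ω.2.2 j.1), ω.2.1 d)) ω))
        (a', h, (xr, yT, hC, yd))) = F h * ∑ a' : 𝒳 0, G a' := by
    calc _ = ∑ a' : 𝒳 0, F h * G a' := Finset.sum_congr rfl fun a' _ => hP3 a' h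
      _ = F h * ∑ a' : 𝒳 0, G a' := by rw [Finset.mul_sum]
  have e3 : (∑ a' : 𝒳 0, ∑ h' : ∀ j : {j : Rst N // j ∈ T}, Yh j.1,
      prob μ (fun ω => ((fun ω => ω.1 0) ω, (fun ω => fun j : {j // j ∈ T} => ω.2.2 j.1) ω,
        (fun ω => ((fun k : Rst N => ω.1 k.1), (fun j : {j // j ∈ T} => ω.2.1 j.1),
          (fun j : {j // j ∈ Tᶜ} => ω.2.2 j.1), ω.2.1 d)) ω))
        (a', h', (xr, yT, hC, yd))) = ∑ a' : 𝒳 0, G a' := by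
    refine Finset.sum_congr rfl fun a' _ => ?_
    calc _ = ∑ h' : ∀ j : {j : Rst N // j ∈ T}, Yh j.1, F h' * G a' :=
          Finset.sum_congr rfl fun h' _ => hP3 a' h'
      _ = (∑ h' : ∀ j : {j : Rst N // j ∈ T}, Yh j.1, F h') * G a' := by
          rw [Finset.sum_mul]
      _ = G a' := by rw [hF1, one_mul]
  rw [hP3 a h, e1, e2, e3]
  ring

end ExtraZero

end NNC

open NNC

/-- **Noisy network coding dominates pure compress–forward (Appendix C).**  For the
single-source network `p(y₂ᴺ | xᴺ)` with source node 1 and multicast destination set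
`D ⊆ [2:N]`, and any fixed pmf `∏_k p(x_k) ∏_{k≥2} p(ŷ_k|y_k,x_k)` satisfying the
compress–forward constraints: the compress–forward rate `min_{d∈D} I(X₁; Ŷ₂ᴺ, Y_d|X₂ᴺ)`
is at most the noisy network coding rate `min_{d∈D} min_{T⊆[2:N]} [NNC expression]`
(hence `R* ≤ R_NNC`); moreover for each destination `d` and cut `T` the noisy network
coding expression exceeds the compress–forward expression by exactly the nonnegative
quantity `I(X(T); Ŷ(Tᶜ) | X(Tᶜ), Y_d, X_d) + Σ_{k∈T} I(Ŷ_k; X₂ᴺ | X_k)`. -/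
theorem nnc_dominates_compress_forward
    (N : ℕ) [NeZero N]
    (𝒳 : Fin N → Type) (𝒴 Yh : Rst N → Type)
    [∀ k, Fintype (𝒳 k)] [∀ k, Fintype (𝒴 k)] [∀ k, Fintype (Yh k)]
    (px : ∀ k, 𝒳 k → ℝ) (hpx0 : ∀ k x, 0 ≤ px k x) (hpx1 : ∀ k, ∑ x, px k x = 1)
    (W : (∀ k, 𝒳 k) → (∀ k : Rst N, 𝒴 k) → ℝ)
    (hW0 : ∀ x y, 0 ≤ W x y) (hW1 : ∀ x, ∑ y, W x y = 1)
    (ph : ∀ k : Rst N, 𝒳 k.1 → 𝒴 k → Yh k → ℝ)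
    (hph0 : ∀ k x y yh, 0 ≤ ph k x y yh) (hph1 : ∀ k x y, ∑ yh, ph k x y yh = 1)
    (μ : (∀ k, 𝒳 k) × (∀ k : Rst N, 𝒴 k) × (∀ k : Rst N, Yh k) → ℝ)
    (hμ : ∀ x y yh, μ (x, y, yh) =
      (∏ k, px k (x k)) * W x y * ∏ k : Rst N, ph k (x k.1) (y k) (yh k))
    (D : Finset (Rst N)) (hD : D.Nonempty)
    (hcon : ∀ d ∈ D, ∀ T : Finset (Rst N), cfConstraint μ d T) :
    D.inf' hD (fun d => cfObj μ d)
        ≤ D.inf' hD (fun d =>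
            Finset.univ.inf' ⟨∅, Finset.mem_univ _⟩ (fun T => nncObj μ d T)) ∧
    ∀ d ∈ D, ∀ T : Finset (Rst N),
      nncObj μ d T = cfExpr μ d T + gapExpr μ d T ∧ 0 ≤ gapExpr μ d T := by
  have hμ0 : ∀ ω, 0 ≤ μ ω := mu_nonneg px W ph μ hpx0 hW0 hph0 hμ
  have hμ1 : ∑ ω, μ ω = 1 := mu_sum_one px W ph μ hpx1 hW1 hph1 hμ
  have hext : ∀ (d : Rst N) (T : Finset (Rst N)), extraMI μ d T = 0 :=
    fun d T => extraMI_eq_zero px W ph μ hpx0 hW0 hph0 hph1 hμ d T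
  have hgap : ∀ (d : Rst N) (T : Finset (Rst N)), 0 ≤ gapExpr μ d T := by
    intro d T
    unfold gapExpr
    exact add_nonneg (condMI_nonneg μ _ _ _ hμ0 hμ1)
      (Finset.sum_nonneg fun k _ => condMI_nonneg μ _ _ _ hμ0 hμ1)
  have hkey : ∀ (d : Rst N) (T : Finset (Rst N)),
      nncObj μ d T = cfExpr μ d T + gapExpr μ d T := by
    intro d T
    have h1 := key_identity μ d T
    rw [hext d T] at h1
    linarith
  have hcf : ∀ d ∈ D, ∀ T : Finset (Rst N), cfObj μ d ≤ cfExpr μ d T := by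
    intro d hd T
    have hc := hcon d hd T
    unfold cfConstraint at hc
    have hsym : condMI μ
        (fun ω => fun j : {j // j ∈ T} => ω.2.1 j.1)
        (fun ω => fun j : {j // j ∈ T} => ω.2.2 j.1)
        (fun ω => ((fun k : Rst N => ω.1 k.1),
                   (fun j : {j // j ∈ Tᶜ} => ω.2.2 j.1), ω.2.1 d))
        = condMI μ
        (fun ω => fun j : {j // j ∈ T} => ω.2.2 j.1)
        (fun ω => fun j : {j // j ∈ T} => ω.2.1 j.1)
        (fun ω => ((fun k : Rst N => ω.1 k.1),
                   (fun j : {j // j ∈ Tᶜ} => ω.2.2 j.1), ω.2.1 d)) :=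
      condMI_symm μ _ _ _
    unfold cfExpr
    rw [← hsym]
    linarith
  constructor
  · refine Finset.le_inf' hD _ fun d hd => ?_
    refine Finset.le_inf' _ _ fun T _ => ?_
    calc D.inf' hD (fun d => cfObj μ d) ≤ cfObj μ d := Finset.inf'_le _ hd
      _ ≤ cfExpr μ d T := hcf d hd T
      _ ≤ nncObj μ d T := by
          rw [hkey d T]
          linarith [hgap d T]
  · intro d hd T
    exact ⟨hkey d T, hgap d T⟩
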